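/- arXiv:math/0309304 — 5 statements merged into one kernel-verified Lean document; each statement's English description precedes it below -/
import Mathlib

section
/- Let ω ∈ (1/2,1) satisfy ∑_{k=1}^m ω^k = 1 (a multinacci number), and suppose a_k, a'_k ∈ {0,1} for k = 0,…,n with ∑_{k=0}^n a_k ω^k > ∑_{k=0}^n a'_k ω^k. Then ∑_{k=0}^n (a_k - a'_k) ω^k ≥ ω^{n+1}. -/
open Finset

private lemma icc_shift (ω : ℝ) (p a b : ℕ) :
    ∑ k ∈ Finset.Icc (p + a) (p + b), ω ^ k = ω ^ p * ∑ j ∈ Finset.Icc a b, ω ^ j := by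
  rw [← Finset.map_add_left_Icc, Finset.sum_map, Finset.mul_sum]
  refine Finset.sum_congr rfl fun j _ => ?_
  simp [addLeftEmbedding_apply, pow_add]

open Classical in
private noncomputable def sepMeas (n ℓ : ℕ) (e : ℕ → ℝ) : ℕ :=
  (2 * ((Finset.range (n + 1 - ℓ)).filter fun k => e k ≠ 0).card + ℓ) * (n + 2) + ℓ

private lemma sep_main (m : ℕ) (hm : 2 ≤ m) (ω : ℝ)
    (hω : ω ∈ Set.Ioo (1 / 2 : ℝ) 1) (hroot : ∑ k ∈ Finset.Icc 1 m, ω ^ k = 1) :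
    ∀ n ℓ (e : ℕ → ℝ), (∀ k, e k = -1 ∨ e k = 0 ∨ e k = 1) → ℓ ≤ n + 1 →
      0 < (∑ k ∈ Finset.range (n + 1 - ℓ), e k * ω ^ k) - ∑ k ∈ Finset.Icc (n + 1 - ℓ) n, ω ^ k →
      ω ^ (n + 1) ≤ (∑ k ∈ Finset.range (n + 1 - ℓ), e k * ω ^ k)
        - ∑ k ∈ Finset.Icc (n + 1 - ℓ) n, ω ^ k := by
  classical
  obtain ⟨hω2, hω1⟩ := hω
  have hω0 : (0:ℝ) < ω := by linarith
  intro n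
  induction n using Nat.strong_induction_on with
  | _ n IHn =>
  suffices H : ∀ μ ℓ (e : ℕ → ℝ), (∀ k, e k = -1 ∨ e k = 0 ∨ e k = 1) → ℓ ≤ n + 1 →
      sepMeas n ℓ e ≤ μ →
      0 < (∑ k ∈ Finset.range (n + 1 - ℓ), e k * ω ^ k) - ∑ k ∈ Finset.Icc (n + 1 - ℓ) n, ω ^ k →
      ω ^ (n + 1) ≤ (∑ k ∈ Finset.range (n + 1 - ℓ), e k * ω ^ k)
        - ∑ k ∈ Finset.Icc (n + 1 - ℓ) n, ω ^ k by
    intro ℓ e h1 h2 h3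
    exact H (sepMeas n ℓ e) ℓ e h1 h2 le_rfl h3
  intro μ
  induction μ using Nat.strong_induction_on with
  | _ μ IHμ =>
  intro ℓ e hOk hle hmeas hpos
  by_cases hltop : ℓ = n + 1
  · exfalso
    subst hltop
    rw [Nat.sub_self] at hpos
    simp only [Finset.range_zero, Finset.sum_empty, zero_sub] at hpos
    have hsp : 0 < ∑ k ∈ Finset.Icc 0 n, ω ^ k :=
      Finset.sum_pos (fun i _ => pow_pos hω0 i) ⟨0, by simp⟩
    linarith
  have hℓn : ℓ ≤ n := by omega
  obtain ⟨p, rfl⟩ : ∃ p, n = p + ℓ := ⟨n - ℓ, by omega⟩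
  rw [show p + ℓ + 1 - ℓ = p + 1 from by omega] at hpos ⊢
  rcases hOk p with hep | hep
  · -- Case B : e p = -1, fold the top coefficient into the run
    have hSeq : (∑ k ∈ Finset.range (p+1), e k * ω ^ k)
          - ∑ k ∈ Finset.Icc (p+1) (p+ℓ), ω ^ k
        = (∑ k ∈ Finset.range (p + ℓ + 1 - (ℓ+1)), e k * ω ^ k)
          - ∑ k ∈ Finset.Icc (p + ℓ + 1 - (ℓ+1)) (p+ℓ), ω ^ k := by
      rw [show p + ℓ + 1 - (ℓ+1) = p from by omega]
      rw [Finset.sum_range_succ, hep]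
      rw [show Finset.Icc p (p+ℓ) = insert p (Finset.Icc (p+1) (p+ℓ)) from by
        ext x; simp only [Finset.mem_Icc, Finset.mem_insert]; omega]
      rw [Finset.sum_insert (by simp)]
      ring
    rw [hSeq] at hpos ⊢
    have hc : ((Finset.range (p+1)).filter fun k => e k ≠ 0).card
        = ((Finset.range p).filter fun k => e k ≠ 0).card + 1 := by
      rw [Finset.range_add_one, Finset.filter_insert, if_pos (by rw [hep]; norm_num),
        Finset.card_insert_of_notMem (by simp)]
    have hmlt : sepMeas (p+ℓ) (ℓ+1) e < sepMeas (p+ℓ) ℓ e := by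
      unfold sepMeas
      rw [show p + ℓ + 1 - (ℓ+1) = p from by omega,
        show p + ℓ + 1 - ℓ = p + 1 from by omega, hc]
      set c := ((Finset.range p).filter fun k => e k ≠ 0).card with hcdef
      have expand : (2*(c+1)+ℓ) * (p+ℓ+2) = (2*c+(ℓ+1))*(p+ℓ+2) + (p+ℓ+2) := by ring
      omega
    exact IHμ (sepMeas (p+ℓ) (ℓ+1) e) (lt_of_lt_of_le hmlt hmeas) (ℓ+1) e hOk (by omega)
      le_rfl hpos
  · by_cases hℓ0 : ℓ = 0
    · subst hℓ0
      simp only [Nat.add_zero] at hpos ⊢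
      rw [show Finset.Icc (p+1) p = ∅ from Finset.Icc_eq_empty (by omega),
        Finset.sum_empty, sub_zero] at hpos ⊢
      rcases hep with hep | hep
      · -- e p = 0
        rcases Nat.eq_zero_or_pos p with rfl | hppos
        · exfalso
          rw [Finset.sum_range_one, hep] at hpos
          simp at hpos
        obtain ⟨q, rfl⟩ : ∃ q, p = q + 1 := ⟨p - 1, by omega⟩
        rw [Finset.sum_range_succ, hep, zero_mul, add_zero] at hpos ⊢
        have h1 := IHn q (by omega) 0 e hOk (by omega)
        rw [Nat.sub_zero, show Finset.Icc (q+1) q = ∅ from Finset.Icc_eq_empty (by omega),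
          Finset.sum_empty, sub_zero] at h1
        have h2 := h1 hpos
        calc ω ^ (q + 1 + 1) ≤ ω ^ (q + 1) :=
              pow_le_pow_of_le_one hω0.le hω1.le (by omega)
          _ ≤ _ := h2
      · -- e p = 1
        rw [Finset.sum_range_succ, hep, one_mul] at hpos ⊢
        by_cases hR : 0 ≤ ∑ k ∈ Finset.range p, e k * ω ^ k
        · have : ω ^ (p + 1) ≤ ω ^ p := pow_le_pow_of_le_one hω0.le hω1.le (by omega)
          linarith
        · push_neg at hR
          exfalso
          rcases Nat.eq_zero_or_pos p with rfl | hppos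
          · simp at hR
          obtain ⟨q, rfl⟩ : ∃ q, p = q + 1 := ⟨p - 1, by omega⟩
          have hOk' : ∀ k, -e k = -1 ∨ -e k = 0 ∨ -e k = 1 := by
            intro k; rcases hOk k with h | h | h <;> rw [h] <;> norm_num
          have h1 := IHn q (by omega) 0 (fun k => -e k) hOk' (by omega)
          rw [Nat.sub_zero, show Finset.Icc (q+1) q = ∅ from Finset.Icc_eq_empty (by omega),
            Finset.sum_empty, sub_zero] at h1
          have hneg : ∑ k ∈ Finset.range (q+1), (fun k => -e k) k * ω ^ k
              = -∑ k ∈ Finset.range (q+1), e k * ω ^ k := by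
            rw [← Finset.sum_neg_distrib]
            exact Finset.sum_congr rfl fun k _ => by ring
          rw [hneg] at h1
          have h2 := h1 (by linarith)
          have h3 : 0 < ω ^ (q + 1) := pow_pos hω0 _
          linarith
    · have hℓ1 : 1 ≤ ℓ := by omega
      have hshift := icc_shift ω p 1 ℓ
      set e'' : ℕ → ℝ := fun k => if k = p then e p - 1 else e k with he''
      have hBsum : ∑ k ∈ Finset.range (p+1), e'' k * ω ^ k
          = (∑ k ∈ Finset.range p, e k * ω ^ k) + (e p - 1) * ω ^ p := by
        rw [Finset.sum_range_succ]
        congr 1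
        · refine Finset.sum_congr rfl fun k hk => ?_
          rw [Finset.mem_range] at hk
          simp [he'', Nat.ne_of_lt hk]
        · simp [he'']
      have hOkB : ∀ k, e'' k = -1 ∨ e'' k = 0 ∨ e'' k = 1 := by
        intro k
        by_cases hk : k = p
        · subst hk
          rcases hep with h | h <;> simp [he'', h]
        · rcases hOk k with h | h | h <;> simp [he'', hk, h]
      by_cases hℓm : ℓ < m
      · -- Case D : short run
        have hsplit : (∑ j ∈ Finset.Icc 1 ℓ, ω ^ j) + ∑ j ∈ Finset.Icc (ℓ+1) m, ω ^ j = 1 := by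
          rw [show Finset.Icc 1 ℓ = Finset.Ioc 0 ℓ from by
              ext x; simp only [Finset.mem_Icc, Finset.mem_Ioc]; omega,
            show Finset.Icc (ℓ+1) m = Finset.Ioc ℓ m from by
              ext x; simp only [Finset.mem_Icc, Finset.mem_Ioc]; omega,
            Finset.sum_Ioc_consecutive _ (by omega) (by omega),
            show Finset.Ioc 0 m = Finset.Icc 1 m from by
              ext x; simp only [Finset.mem_Icc, Finset.mem_Ioc]; omega]
          exact hroot
        have hone : ω ^ p * (∑ j ∈ Finset.Icc 1 ℓ, ω ^ j)
            + ω ^ p * (∑ j ∈ Finset.Icc (ℓ+1) m, ω ^ j) = ω ^ p := by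
          rw [← mul_add, hsplit, mul_one]
        have hS : (∑ k ∈ Finset.range (p+1), e k * ω ^ k)
              - ∑ k ∈ Finset.Icc (p+1) (p+ℓ), ω ^ k
            = (∑ k ∈ Finset.range (p+1), e'' k * ω ^ k)
              + ω ^ p * ∑ j ∈ Finset.Icc (ℓ+1) m, ω ^ j := by
          rw [hshift, hBsum, Finset.sum_range_succ]
          linarith [hone]
        by_cases hB : 0 ≤ ∑ k ∈ Finset.range (p+1), e'' k * ω ^ k
        · rw [hS] at hpos ⊢
          have hmem : ℓ + 1 ∈ Finset.Icc (ℓ+1) m := by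
            simp only [Finset.mem_Icc]; omega
          have hterm : ω ^ (ℓ+1) ≤ ∑ j ∈ Finset.Icc (ℓ+1) m, ω ^ j :=
            Finset.single_le_sum (fun i _ => (pow_pos hω0 i).le) hmem
          have h4 : ω ^ (p + ℓ + 1) = ω ^ p * ω ^ (ℓ + 1) := by
            rw [show p + ℓ + 1 = p + (ℓ + 1) from by omega, pow_add]
          have h5 : ω ^ p * ω ^ (ℓ+1) ≤ ω ^ p * ∑ j ∈ Finset.Icc (ℓ+1) m, ω ^ j :=
            mul_le_mul_of_nonneg_left hterm (pow_pos hω0 p).le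
          linarith
        · push_neg at hB
          exfalso
          have hOk'' : ∀ k, -e'' k = -1 ∨ -e'' k = 0 ∨ -e'' k = 1 := by
            intro k
            rcases hOkB k with h | h | h <;> rw [h] <;> norm_num
          have h1 := IHn p (by omega) 0 (fun k => -e'' k) hOk'' (by omega)
          rw [Nat.sub_zero, show Finset.Icc (p+1) p = ∅ from Finset.Icc_eq_empty (by omega),
            Finset.sum_empty, sub_zero] at h1
          have hneg : ∑ k ∈ Finset.range (p+1), (fun k => -e'' k) k * ω ^ k
              = -∑ k ∈ Finset.range (p+1), e'' k * ω ^ k := by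
            rw [← Finset.sum_neg_distrib]
            exact Finset.sum_congr rfl fun k _ => by ring
          rw [hneg] at h1
          have h2 := h1 (by linarith)
          have hSig : ω ≤ ∑ j ∈ Finset.Icc 1 ℓ, ω ^ j := by
            have h6 : ω ^ 1 ≤ ∑ j ∈ Finset.Icc 1 ℓ, ω ^ j :=
              Finset.single_le_sum (fun i _ => (pow_pos hω0 i).le)
                (by simp only [Finset.mem_Icc]; omega)
            simpa using h6
          have hSig2 : ∑ j ∈ Finset.Icc (ℓ+1) m, ω ^ j ≤ 1 - ω := by linarith
          rw [hS] at hpos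
          have hppow : (0:ℝ) < ω ^ p := pow_pos hω0 p
          have hpow1 : ω ^ (p+1) = ω ^ p * ω := pow_succ ω p
          nlinarith [mul_le_mul_of_nonneg_left hSig2 hppow.le,
            mul_pos hppow (show (0:ℝ) < 2*ω - 1 by linarith)]
      · -- Case E : long run, ℓ ≥ m
        push_neg at hℓm
        have hshiftm := icc_shift ω p 1 m
        rw [hroot, mul_one] at hshiftm
        have hsplit2 : (∑ k ∈ Finset.Icc (p+1) (p+m), ω ^ k)
            + ∑ k ∈ Finset.Icc (p+m+1) (p+ℓ), ω ^ k
            = ∑ k ∈ Finset.Icc (p+1) (p+ℓ), ω ^ k := by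
          rw [show Finset.Icc (p+1) (p+m) = Finset.Ioc p (p+m) from by
              ext x; simp only [Finset.mem_Icc, Finset.mem_Ioc]; omega,
            show Finset.Icc (p+m+1) (p+ℓ) = Finset.Ioc (p+m) (p+ℓ) from by
              ext x; simp only [Finset.mem_Icc, Finset.mem_Ioc]; omega,
            show Finset.Icc (p+1) (p+ℓ) = Finset.Ioc p (p+ℓ) from by
              ext x; simp only [Finset.mem_Icc, Finset.mem_Ioc]; omega]
          exact Finset.sum_Ioc_consecutive _ (by omega) (by omega)
        have hS2 : (∑ k ∈ Finset.range (p+1), e k * ω ^ k)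
              - ∑ k ∈ Finset.Icc (p+1) (p+ℓ), ω ^ k
            = (∑ k ∈ Finset.range (p+1), e'' k * ω ^ k)
              - ∑ k ∈ Finset.Icc (p+m+1) (p+ℓ), ω ^ k := by
          rw [hBsum, Finset.sum_range_succ]
          linarith [hsplit2, hshiftm]
        by_cases hℓem : ℓ = m
        · -- run has length exactly m : reduce degree to p
          subst hℓem
          rw [show Finset.Icc (p+ℓ+1) (p+ℓ) = ∅ from Finset.Icc_eq_empty (by omega),
            Finset.sum_empty, sub_zero] at hS2
          rw [hS2] at hpos ⊢
          have h1 := IHn p (by omega) 0 e'' hOkB (by omega)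
          rw [Nat.sub_zero, show Finset.Icc (p+1) p = ∅ from Finset.Icc_eq_empty (by omega),
            Finset.sum_empty, sub_zero] at h1
          have h2 := h1 hpos
          calc ω ^ (p + ℓ + 1) ≤ ω ^ (p + 1) :=
                pow_le_pow_of_le_one hω0.le hω1.le (by omega)
            _ ≤ _ := h2
        · -- run longer than m : fold a block of m, recurse on measure
          have hmℓ : m < ℓ := by omega
          set e' : ℕ → ℝ := fun k => if k < p then e k else if k = p then e p - 1 else 0
            with he'
          have hOk' : ∀ k, e' k = -1 ∨ e' k = 0 ∨ e' k = 1 := by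
            intro k
            rcases lt_trichotomy k p with hk | hk | hk
            · rcases hOk k with h | h | h <;> simp [he', hk, h]
            · subst hk
              rcases hep with h | h <;> simp [he', h]
            · simp [he', Nat.lt_asymm hk, Nat.ne_of_gt hk]
          have hsub : Finset.range (p+1) ⊆ Finset.range (p+m+1) :=
            Finset.range_subset_range.2 (by omega)
          have hzero : ∀ x ∈ Finset.range (p+m+1), x ∉ Finset.range (p+1) →
              e' x * ω ^ x = 0 := by
            intro x hx hnx
            rw [Finset.mem_range] at hnx
            have h7 : ¬ x < p := by omega
            have h8 : x ≠ p := by omega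
            simp [he', h7, h8]
          have hext : ∑ k ∈ Finset.range (p+m+1), e' k * ω ^ k
              = ∑ k ∈ Finset.range (p+1), e'' k * ω ^ k := by
            rw [← Finset.sum_subset hsub hzero]
            refine Finset.sum_congr rfl fun k hk => ?_
            rw [Finset.mem_range] at hk
            rcases lt_or_eq_of_le (Nat.lt_succ_iff.mp hk) with hk' | hk'
            · simp [he', he'', hk', Nat.ne_of_lt hk']
            · subst hk'
              simp [he', he'']
          have hform : (∑ k ∈ Finset.range (p+1), e k * ω ^ k)
                - ∑ k ∈ Finset.Icc (p+1) (p+ℓ), ω ^ k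
              = (∑ k ∈ Finset.range (p + ℓ + 1 - (ℓ - m)), e' k * ω ^ k)
                - ∑ k ∈ Finset.Icc (p + ℓ + 1 - (ℓ - m)) (p + ℓ), ω ^ k := by
            rw [show p + ℓ + 1 - (ℓ - m) = p + m + 1 from by omega, hext]
            exact hS2
          rw [hform] at hpos ⊢
          -- measure decreases
          classical
          have hfilter1 : (Finset.range (p+m+1)).filter (fun k => e' k ≠ 0)
              = (Finset.range (p+1)).filter (fun k => e' k ≠ 0) := by
            ext x
            simp only [Finset.mem_filter, Finset.mem_range]
            constructor
            · rintro ⟨hx1, hx2⟩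
              refine ⟨?_, hx2⟩
              by_contra hc
              have h7 : ¬ x < p := by omega
              have h8 : x ≠ p := by omega
              exact hx2 (by simp [he', h7, h8])
            · rintro ⟨hx1, hx2⟩
              exact ⟨by omega, hx2⟩
          have hfilter2 : (Finset.range p).filter (fun k => e' k ≠ 0)
              = (Finset.range p).filter (fun k => e k ≠ 0) := by
            refine Finset.filter_congr fun x hx => ?_
            rw [Finset.mem_range] at hx
            simp [he', hx]
          have hmlt : sepMeas (p+ℓ) (ℓ-m) e' < sepMeas (p+ℓ) ℓ e := by
            unfold sepMeas
            rw [show p + ℓ + 1 - (ℓ - m) = p + m + 1 from by omega,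
              show p + ℓ + 1 - ℓ = p + 1 from by omega, hfilter1]
            set c := ((Finset.range p).filter fun k => e k ≠ 0).card with hcdef
            rcases hep with h | h
            · have hcn : ((Finset.range (p+1)).filter fun k => e' k ≠ 0).card = c + 1 := by
                rw [Finset.range_add_one, Finset.filter_insert,
                  if_pos (show e' p ≠ 0 by simp [he', h]),
                  Finset.card_insert_of_notMem (by simp), hfilter2]
              have hco : ((Finset.range (p+1)).filter fun k => e k ≠ 0).card = c := by
                rw [Finset.range_add_one, Finset.filter_insert,
                  if_neg (show ¬ e p ≠ 0 by simp [h])]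
              rw [hcn, hco]
              have hmul : (2 * (c + 1) + (ℓ - m)) * (p + ℓ + 2)
                  ≤ (2 * c + ℓ) * (p + ℓ + 2) :=
                Nat.mul_le_mul_right _ (by omega)
              omega
            · have hcn : ((Finset.range (p+1)).filter fun k => e' k ≠ 0).card = c := by
                rw [Finset.range_add_one, Finset.filter_insert,
                  if_neg (show ¬ e' p ≠ 0 by simp [he', h]), hfilter2]
              have hco : ((Finset.range (p+1)).filter fun k => e k ≠ 0).card = c + 1 := by
                rw [Finset.range_add_one, Finset.filter_insert,
                  if_pos (show e p ≠ 0 by simp [h]),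
                  Finset.card_insert_of_notMem (by simp)]
              rw [hcn, hco]
              have hmul : (2 * c + (ℓ - m)) * (p + ℓ + 2)
                  ≤ (2 * (c + 1) + ℓ) * (p + ℓ + 2) :=
                Nat.mul_le_mul_right _ (by omega)
              omega
          exact IHμ (sepMeas (p+ℓ) (ℓ-m) e') (lt_of_lt_of_le hmlt hmeas) (ℓ-m) e' hOk'
            (by omega) le_rfl hpos

/-- Separation property for multinacci ω: if two 0-1 polynomials in ω differ,
they differ by at least ω^{n+1}. -/
theorem separation (m : ℕ) (hm : 2 ≤ m) (ω : ℝ)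
    (hω : ω ∈ Set.Ioo (1 / 2 : ℝ) 1) (hroot : ∑ k ∈ Finset.Icc 1 m, ω ^ k = 1)
    (n : ℕ) (a a' : ℕ → ℝ)
    (ha : ∀ k, a k = 0 ∨ a k = 1) (ha' : ∀ k, a' k = 0 ∨ a' k = 1)
    (h : ∑ k ∈ Finset.range (n + 1), a k * ω ^ k >
         ∑ k ∈ Finset.range (n + 1), a' k * ω ^ k) :
    ω ^ (n + 1) ≤ ∑ k ∈ Finset.range (n + 1), (a k - a' k) * ω ^ k := by
  have hIcc : Finset.Icc (n + 1 - 0) n = ∅ := by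
    rw [Nat.sub_zero]; exact Finset.Icc_eq_empty (by omega)
  have hdiff : ∑ k ∈ Finset.range (n + 1), (a k - a' k) * ω ^ k
      = (∑ k ∈ Finset.range (n + 1), a k * ω ^ k)
        - ∑ k ∈ Finset.range (n + 1), a' k * ω ^ k := by
    rw [← Finset.sum_sub_distrib]
    exact Finset.sum_congr rfl fun k _ => by ring
  have hOk : ∀ k, a k - a' k = -1 ∨ a k - a' k = 0 ∨ a k - a' k = 1 := by
    intro k
    rcases ha k with h1 | h1 <;> rcases ha' k with h2 | h2 <;> rw [h1, h2] <;> norm_num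
  have := sep_main m hm ω hω hroot n 0 (fun k => a k - a' k) hOk (by omega)
  simp only [Nat.sub_zero] at this
  rw [show Finset.Icc (n+1) n = ∅ from Finset.Icc_eq_empty (by omega), Finset.sum_empty,
    sub_zero] at this
  apply this
  rw [hdiff]; linarith
end

section
/- Let ω be a multinacci number and n ≥ 1. Assume digits a_k, b_k, c_k ∈ {0,1} with a_k + b_k + c_k = 1 for 0 ≤ k ≤ n-1, and α_k, β_k, γ_k ∈ {0,1} with α_k + β_k + γ_k = 1 for 0 ≤ k ≤ n. Then the three inequalities ω^n + ∑_{k=0}^{n-1} a_k ω^k > ∑_{k=0}^{n} α_k ω^k, ω^n + ∑_{k=0}^{n-1} b_k ω^k > ∑_{k=0}^{n} β_k ω^k, ω^n + ∑_{k=0}^{n-1} c_k ω^k > ∑_{k=0}^{n} γ_k ω^k cannot all hold simultaneously. -/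
noncomputable def tfun (m : ℕ) (ω : ℝ) (j : ℕ) : ℝ :=
  if j ≤ m then ω * ∑ i ∈ Finset.range j, ω ^ i else 1 + ω

set_option maxHeartbeats 2000000 in
lemma forb (m : ℕ) (hm : 2 ≤ m) (ω : ℝ)
    (hω : ω ∈ Set.Ioo (1 / 2 : ℝ) 1) (hroot : ∑ k ∈ Finset.Icc 1 m, ω ^ k = 1) :
    ∀ N : ℕ, ∀ ε : ℕ → ℝ, (∀ k ≤ N, ε k = -1 ∨ ε k = 0 ∨ ε k = 1) →
      ∀ j, 1 ≤ j → j ≤ m + 1 →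
      ¬ (tfun m ω (j - 1) * ω ^ N < ∑ k ∈ Finset.range (N + 1), ε k * ω ^ k ∧
         ∑ k ∈ Finset.range (N + 1), ε k * ω ^ k < tfun m ω j * ω ^ N) := by
  obtain ⟨hω1, hω2⟩ := hω
  have hω0 : (0:ℝ) < ω := by linarith
  set t := tfun m ω with ht
  have ht0 : t 0 = 0 := by simp [ht, tfun]
  have ht1 : t 1 = ω := by simp [ht, tfun, Nat.one_le_iff_ne_zero, (by omega : 1 ≤ m)]
  have hroot' : ∑ i ∈ Finset.range m, ω ^ (1 + i) = 1 := by
    rw [← Finset.Ico_add_one_right_eq_Icc, Finset.sum_Ico_eq_sum_range] at hroot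
    simpa using hroot
  have htm : t m = 1 := by
    rw [ht, tfun, if_pos le_rfl, Finset.mul_sum, ← hroot']
    apply Finset.sum_congr rfl; intro i _; rw [pow_add, pow_one]
  have htm1 : t (m + 1) = 1 + ω := by rw [ht, tfun, if_neg (by omega)]
  have ht2 : t 2 = ω + ω ^ 2 := by
    rw [ht, tfun, if_pos hm, Finset.sum_range_succ, Finset.sum_range_one]; ring
  have htsucc : ∀ j, 1 ≤ j → j ≤ m → t j = ω * (1 + t (j - 1)) := by
    intro j hj1 hjm
    obtain ⟨i, rfl⟩ : ∃ i, j = i + 1 := ⟨j - 1, by omega⟩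
    rw [ht, tfun, tfun, if_pos hjm, if_pos (by omega : i + 1 - 1 ≤ m)]
    simp only [Nat.add_sub_cancel]
    rw [Finset.sum_range_succ']
    simp only [pow_zero, pow_succ']
    rw [← Finset.mul_sum]; ring
  have htnn : ∀ j, 0 ≤ t j := by
    intro j; rw [ht, tfun]; split
    · apply mul_nonneg hω0.le
      apply Finset.sum_nonneg; intro i _; positivity
    · linarith
  have htle1 : ∀ j, j ≤ m → t j ≤ 1 := by
    intro j hj
    have : t j ≤ t m := by
      rw [ht, tfun, tfun, if_pos hj, if_pos le_rfl]
      apply mul_le_mul_of_nonneg_left _ hω0.le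
      apply Finset.sum_le_sum_of_subset_of_nonneg (Finset.range_subset_range.2 hj)
      intro i _ _; positivity
    linarith [htm ▸ this]
  have hsum2 : ω + ω ^ 2 ≤ 1 := by
    have hsub : ∑ k ∈ Finset.Icc 1 2, ω ^ k ≤ ∑ k ∈ Finset.Icc 1 m, ω ^ k := by
      apply Finset.sum_le_sum_of_subset_of_nonneg (Finset.Icc_subset_Icc_right hm)
      intro i _ _; positivity
    have h2 : ∑ k ∈ Finset.Icc 1 2, ω ^ k = ω + ω ^ 2 := by
      rw [show Finset.Icc 1 2 = {1, 2} from rfl]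
      simp [Finset.sum_insert, pow_one]
    rw [h2, hroot] at hsub; exact hsub
  intro N
  induction N with
  | zero =>
    intro ε hε j hj1 hj2
    rintro ⟨h1, h2⟩
    rw [show (0:ℕ)+1 = 1 from rfl, Finset.sum_range_one] at h1 h2
    simp only [pow_zero, mul_one] at h1 h2
    have hnn := htnn (j - 1)
    rcases hε 0 le_rfl with h | h | h
    · rw [h] at h1; linarith
    · rw [h] at h1; linarith
    · rw [h] at h1 h2 -- ε 0 = 1
      by_cases hjm : j ≤ m
      · have := htle1 j hjm; linarith
      · have hje : j = m + 1 := by omega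
        rw [hje] at h1; simp only [Nat.add_sub_cancel] at h1
        rw [htm] at h1; linarith
  | succ N ih =>
    intro ε hε j hj1 hj2
    rintro ⟨h1, h2⟩
    have hε' : ∀ k ≤ N, ε k = -1 ∨ ε k = 0 ∨ ε k = 1 := fun k hk => hε k (by omega)
    set r := ∑ k ∈ Finset.range (N + 1), ε k * ω ^ k with hr
    rw [Finset.sum_range_succ, ← hr] at h1 h2
    have hps : ω ^ (N + 1) = ω * ω ^ N := by rw [pow_succ]; ring
    have hpN : (0:ℝ) < ω ^ N := pow_pos hω0 N
    have hpN1 : (0:ℝ) < ω ^ (N + 1) := pow_pos hω0 (N + 1)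
    rcases hε (N + 1) le_rfl with he | he | he
    · -- ε (N+1) = -1
      rw [he] at h1 h2
      by_cases hjm : j ≤ m
      · -- new interval (t j, t (j+1))
        have hlow : t j * ω ^ N < r := by
          have := htsucc j hj1 hjm
          nlinarith [htnn (j - 1)]
        by_cases hjm2 : j + 1 ≤ m
        · refine ih ε hε' (j + 1) (by omega) (by omega) ⟨?_, ?_⟩
          · simpa using hlow
          · have := htsucc (j + 1) (by omega) hjm2
            simp only [Nat.add_sub_cancel] at this
            nlinarith [htnn j]
        · -- j = m
          have hje : j = m := by omega
          refine ih ε hε' (m + 1) (by omega) le_rfl ⟨?_, ?_⟩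
          · simpa [hje] using hlow
          · rw [htm1]
            rw [hje, htm] at h2
            nlinarith
      · -- j = m + 1
        have hje : j = m + 1 := by omega
        rw [hje] at h1 h2
        simp only [Nat.add_sub_cancel] at h1
        rw [htm] at h1; rw [htm1] at h2
        refine ih ε hε' (m + 1) (by omega) le_rfl ⟨?_, ?_⟩
        · simp only [Nat.add_sub_cancel]
          rw [htm]; nlinarith
        · rw [htm1]; nlinarith
    · -- ε (N+1) = 0
      rw [he] at h1 h2
      simp only [zero_mul, add_zero] at h1 h2
      by_cases hjm : j ≤ m
      · refine ih ε hε' 1 le_rfl (by omega) ⟨?_, ?_⟩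
        · simp only [Nat.sub_self, ht0, zero_mul]
          nlinarith [htnn (j - 1)]
        · rw [ht1]
          nlinarith [htle1 j hjm]
      · have hje : j = m + 1 := by omega
        rw [hje] at h1 h2
        simp only [Nat.add_sub_cancel] at h1
        rw [htm] at h1; rw [htm1] at h2
        refine ih ε hε' 2 (by omega) (by omega) ⟨?_, ?_⟩
        · show t 1 * ω ^ N < r
          rw [ht1]; nlinarith
        · rw [ht2]; nlinarith
    · -- ε (N+1) = 1
      rw [he] at h1 h2
      by_cases hjm : j ≤ m
      · -- -r ∈ (0, ω^(N+1))
        have hsumneg : ∑ k ∈ Finset.range (N + 1), (fun k => -ε k) k * ω ^ k = -r := by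
          rw [hr, ← Finset.sum_neg_distrib]
          apply Finset.sum_congr rfl; intro k _; ring
        refine ih (fun k => -ε k) (fun k hk => by rcases hε' k hk with h|h|h <;> simp [h])
          1 le_rfl (by omega) ⟨?_, ?_⟩
        · rw [hsumneg]
          simp only [Nat.sub_self, ht0, zero_mul]
          nlinarith [htle1 j hjm]
        · rw [hsumneg, ht1]
          nlinarith [htnn (j - 1)]
      · have hje : j = m + 1 := by omega
        rw [hje] at h1 h2
        simp only [Nat.add_sub_cancel] at h1
        rw [htm] at h1; rw [htm1] at h2
        refine ih ε hε' 1 le_rfl (by omega) ⟨?_, ?_⟩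
        · simp only [Nat.sub_self, ht0, zero_mul]; nlinarith
        · rw [ht1]; nlinarith

lemma sep (m : ℕ) (hm : 2 ≤ m) (ω : ℝ)
    (hω : ω ∈ Set.Ioo (1 / 2 : ℝ) 1) (hroot : ∑ k ∈ Finset.Icc 1 m, ω ^ k = 1)
    (N : ℕ) (ε : ℕ → ℝ) (hε : ∀ k ≤ N, ε k = -1 ∨ ε k = 0 ∨ ε k = 1)
    (hpos : 0 < ∑ k ∈ Finset.range (N + 1), ε k * ω ^ k) :
    ω ^ (N + 1) ≤ ∑ k ∈ Finset.range (N + 1), ε k * ω ^ k := by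
  have hω0 : (0:ℝ) < ω := by have := hω.1; linarith
  have h := forb m hm ω hω hroot N ε hε 1 le_rfl (by omega)
  by_contra hc
  push_neg at hc
  apply h
  constructor
  · simpa [tfun] using hpos
  · have ht1 : tfun m ω 1 = ω := by
      simp [tfun, (by omega : 1 ≤ m)]
    rw [ht1]
    calc ∑ k ∈ Finset.range (N + 1), ε k * ω ^ k < ω ^ (N + 1) := hc
    _ = ω * ω ^ N := by rw [pow_succ]; ring

lemma digit_diff {x y : ℝ} (hx : x = 0 ∨ x = 1) (hy : y = 0 ∨ y = 1) :
    x - y = -1 ∨ x - y = 0 ∨ x - y = 1 := by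
  rcases hx with h | h <;> rcases hy with h' | h' <;> rw [h, h'] <;> norm_num

lemma key (m : ℕ) (hm : 2 ≤ m) (ω : ℝ)
    (hω : ω ∈ Set.Ioo (1 / 2 : ℝ) 1) (hroot : ∑ k ∈ Finset.Icc 1 m, ω ^ k = 1)
    (n' : ℕ) (a b c α β γ : ℕ → ℝ)
    (hab : ∀ k < n' + 1, (a k = 0 ∨ a k = 1) ∧ (b k = 0 ∨ b k = 1) ∧ (c k = 0 ∨ c k = 1)
      ∧ a k + b k + c k = 1)
    (hαβ : ∀ k < n' + 2, (α k = 0 ∨ α k = 1) ∧ (β k = 0 ∨ β k = 1) ∧ (γ k = 0 ∨ γ k = 1)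
      ∧ α k + β k + γ k = 1)
    (hαn : α (n' + 1) = 1) (hβn : β (n' + 1) = 0) (hγn : γ (n' + 1) = 0)
    (h1 : ω ^ (n' + 1) + ∑ k ∈ Finset.range (n' + 1), a k * ω ^ k >
      ∑ k ∈ Finset.range (n' + 2), α k * ω ^ k)
    (h2 : ω ^ (n' + 1) + ∑ k ∈ Finset.range (n' + 1), b k * ω ^ k >
      ∑ k ∈ Finset.range (n' + 2), β k * ω ^ k)
    (h3 : ω ^ (n' + 1) + ∑ k ∈ Finset.range (n' + 1), c k * ω ^ k >
      ∑ k ∈ Finset.range (n' + 2), γ k * ω ^ k) : False := by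
  have hω0 : (0:ℝ) < ω := by have := hω.1; linarith
  rw [Finset.sum_range_succ (fun k => α k * ω ^ k) (n' + 1), hαn, one_mul] at h1
  rw [Finset.sum_range_succ (fun k => β k * ω ^ k) (n' + 1), hβn, zero_mul, add_zero] at h2
  rw [Finset.sum_range_succ (fun k => γ k * ω ^ k) (n' + 1), hγn, zero_mul, add_zero] at h3
  -- difference sums
  have hdiff : ∀ u v : ℕ → ℝ, ∑ k ∈ Finset.range (n' + 1), (u k - v k) * ω ^ k =
      ∑ k ∈ Finset.range (n' + 1), u k * ω ^ k - ∑ k ∈ Finset.range (n' + 1), v k * ω ^ k := by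
    intro u v
    rw [← Finset.sum_sub_distrib]
    apply Finset.sum_congr rfl; intro k _; ring
  -- first inequality: D_a ≥ ω^(n'+1)
  have SA : ω ^ (n' + 1) ≤ ∑ k ∈ Finset.range (n' + 1), (a k - α k) * ω ^ k := by
    apply sep m hm ω hω hroot n'
    · intro k hk
      exact digit_diff (hab k (by omega)).1 (hαβ k (by omega)).1
    · rw [hdiff]; linarith
  -- second inequality, ε has top digit 1
  have SB : ω ^ (n' + 2) ≤
      ω ^ (n' + 1) + ∑ k ∈ Finset.range (n' + 1), (b k - β k) * ω ^ k := by
    have hsum : ∑ k ∈ Finset.range (n' + 2),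
        (if k ≤ n' then b k - β k else 1) * ω ^ k =
        ω ^ (n' + 1) + ∑ k ∈ Finset.range (n' + 1), (b k - β k) * ω ^ k := by
      rw [Finset.sum_range_succ]
      beta_reduce
      rw [if_neg (by omega : ¬ n' + 1 ≤ n'), one_mul]
      rw [add_comm]
      congr 1
      apply Finset.sum_congr rfl
      intro k hk
      have hk' := Finset.mem_range.1 hk
      rw [if_pos (by omega : k ≤ n')]
    have := sep m hm ω hω hroot (n' + 1)
      (fun k => if k ≤ n' then b k - β k else 1) ?_ ?_
    · beta_reduce at this
      rw [hsum] at this; exact this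
    · intro k hk
      by_cases h : k ≤ n'
      · simp only [if_pos h]
        exact digit_diff (hab k (by omega)).2.1 (hαβ k (by omega)).2.1
      · simp only [if_neg h]; tauto
    · beta_reduce
      rw [hsum, hdiff]; linarith
  have SC : ω ^ (n' + 2) ≤
      ω ^ (n' + 1) + ∑ k ∈ Finset.range (n' + 1), (c k - γ k) * ω ^ k := by
    have hsum : ∑ k ∈ Finset.range (n' + 2),
        (if k ≤ n' then c k - γ k else 1) * ω ^ k =
        ω ^ (n' + 1) + ∑ k ∈ Finset.range (n' + 1), (c k - γ k) * ω ^ k := by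
      rw [Finset.sum_range_succ]
      beta_reduce
      rw [if_neg (by omega : ¬ n' + 1 ≤ n'), one_mul]
      rw [add_comm]
      congr 1
      apply Finset.sum_congr rfl
      intro k hk
      have hk' := Finset.mem_range.1 hk
      rw [if_pos (by omega : k ≤ n')]
    have := sep m hm ω hω hroot (n' + 1)
      (fun k => if k ≤ n' then c k - γ k else 1) ?_ ?_
    · beta_reduce at this
      rw [hsum] at this; exact this
    · intro k hk
      by_cases h : k ≤ n'
      · simp only [if_pos h]
        exact digit_diff (hab k (by omega)).2.2.1 (hαβ k (by omega)).2.2.1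
      · simp only [if_neg h]; tauto
    · beta_reduce
      rw [hsum, hdiff]; linarith
  -- the three differences sum to zero
  have hzero : ∑ k ∈ Finset.range (n' + 1), (a k - α k) * ω ^ k +
      ∑ k ∈ Finset.range (n' + 1), (b k - β k) * ω ^ k +
      ∑ k ∈ Finset.range (n' + 1), (c k - γ k) * ω ^ k = 0 := by
    rw [← Finset.sum_add_distrib, ← Finset.sum_add_distrib]
    apply Finset.sum_eq_zero
    intro k hk
    have hk' := Finset.mem_range.1 hk
    have e1 := (hab k (by omega)).2.2.2
    have e2 := (hαβ k (by omega)).2.2.2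
    have : a k - α k + (b k - β k) + (c k - γ k) = 0 := by linarith
    calc (a k - α k) * ω ^ k + (b k - β k) * ω ^ k + (c k - γ k) * ω ^ k
        = (a k - α k + (b k - β k) + (c k - γ k)) * ω ^ k := by ring
      _ = 0 := by rw [this, zero_mul]
  have hps : ω ^ (n' + 2) = ω * ω ^ (n' + 1) := by rw [pow_succ]; ring
  have hpp : (0:ℝ) < ω ^ (n' + 1) := pow_pos hω0 _
  nlinarith [hω.1]


/-- Key inequality for golden gaskets: the three strict inequalities of
Proposition (all images of the central hole are holes) cannot hold
simultaneously when ω is multinacci. -/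
theorem holes_inequalities (m : ℕ) (hm : 2 ≤ m) (ω : ℝ)
    (hω : ω ∈ Set.Ioo (1 / 2 : ℝ) 1) (hroot : ∑ k ∈ Finset.Icc 1 m, ω ^ k = 1)
    (n : ℕ) (hn : 1 ≤ n)
    (a b c α β γ : ℕ → ℝ)
    (hab : ∀ k < n, (a k = 0 ∨ a k = 1) ∧ (b k = 0 ∨ b k = 1) ∧ (c k = 0 ∨ c k = 1)
      ∧ a k + b k + c k = 1)
    (hαβ : ∀ k < n + 1, (α k = 0 ∨ α k = 1) ∧ (β k = 0 ∨ β k = 1) ∧ (γ k = 0 ∨ γ k = 1)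
      ∧ α k + β k + γ k = 1) :
    ¬ ((ω ^ n + ∑ k ∈ Finset.range n, a k * ω ^ k > ∑ k ∈ Finset.range (n + 1), α k * ω ^ k) ∧
       (ω ^ n + ∑ k ∈ Finset.range n, b k * ω ^ k > ∑ k ∈ Finset.range (n + 1), β k * ω ^ k) ∧
       (ω ^ n + ∑ k ∈ Finset.range n, c k * ω ^ k > ∑ k ∈ Finset.range (n + 1), γ k * ω ^ k)) := by
  rintro ⟨h1, h2, h3⟩
  obtain ⟨n', rfl⟩ : ∃ n', n = n' + 1 := ⟨n - 1, by omega⟩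
  obtain ⟨hA, hB, hC, hS⟩ := hαβ (n' + 1) (by omega)
  rcases hA with hA | hA
  · rcases hB with hB | hB
    · -- α = β = 0 at top, so γ = 1
      have hC1 : γ (n' + 1) = 1 := by linarith
      exact key m hm ω hω hroot n' c a b γ α β
        (fun k hk => ⟨(hab k hk).2.2.1, (hab k hk).1, (hab k hk).2.1,
          by linarith [(hab k hk).2.2.2]⟩)
        (fun k hk => ⟨(hαβ k hk).2.2.1, (hαβ k hk).1, (hαβ k hk).2.1,
          by linarith [(hαβ k hk).2.2.2]⟩)
        hC1 hA hB h3 h1 h2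
    · -- β = 1
      have hC0 : γ (n' + 1) = 0 := by
        rcases hC with h | h
        · exact h
        · linarith
      exact key m hm ω hω hroot n' b a c β α γ
        (fun k hk => ⟨(hab k hk).2.1, (hab k hk).1, (hab k hk).2.2.1,
          by linarith [(hab k hk).2.2.2]⟩)
        (fun k hk => ⟨(hαβ k hk).2.1, (hαβ k hk).1, (hαβ k hk).2.2.1,
          by linarith [(hαβ k hk).2.2.2]⟩)
        hB hA hC0 h2 h1 h3
  · -- α = 1
    have hB0 : β (n' + 1) = 0 := by
      rcases hB with h | h
      · exact h
      · rcases hC with h' | h' <;> linarith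
    have hC0 : γ (n' + 1) = 0 := by
      rcases hC with h | h
      · exact h
      · linarith
    exact key m hm ω hω hroot n' a b c α β γ hab hαβ hA hB0 hC0 h1 h2 h3
end

section
/- For every m ≥ 2, 1 - 3ω_m² + 3ω_m^{2(m+1)} > 0. In particular, for m = 2 (golden ratio ω_2 = (√5-1)/2), 1 - 3ω_2² + 3ω_2⁶ = ω_2⁸, and for m ≥ 3 one has ω_m < 1/√3 so 1 - 3ω_m² > 0. -/
/-- Cubic identity: golden-type relation gives the key equality. -/
lemma gold_eq (ω : ℝ) (h : ω ^ 2 = 1 - ω) :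
    1 - 3 * ω ^ 2 + 3 * ω ^ 6 = ω ^ 8 := by
  linear_combination (-ω^6 + ω^5 + ω^4 + ω^2 - ω - 1) * h

/-- For m ≥ 3, the multinacci root is below 1/√3. -/
lemma sqrt3_bound (m : ℕ) (hm : 3 ≤ m) (ω : ℝ) (hω : ω ∈ Set.Ioo (0 : ℝ) 1)
    (hsum : ∑ k ∈ Finset.Icc 1 m, ω ^ k = 1) : ω < 1 / Real.sqrt 3 := by
  obtain ⟨h0, h1⟩ := hω
  have hsub : Finset.Icc 1 3 ⊆ Finset.Icc 1 m := Finset.Icc_subset_Icc_right hm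
  have h3 : ω + ω ^ 2 + ω ^ 3 ≤ 1 := by
    have := Finset.sum_le_sum_of_subset_of_nonneg hsub
      (fun i _ _ => le_of_lt (pow_pos h0 i))
    rw [hsum] at this
    have h13 : Finset.Icc 1 3 = {1, 2, 3} := by decide
    rw [h13, Finset.sum_insert (by decide), Finset.sum_insert (by decide),
      Finset.sum_singleton] at this
    calc ω + ω ^ 2 + ω ^ 3 = ω ^ 1 + (ω ^ 2 + ω ^ 3) := by ring
      _ ≤ 1 := this
  have s3pos : (0 : ℝ) < Real.sqrt 3 := Real.sqrt_pos.mpr (by norm_num)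
  have s3sq : Real.sqrt 3 ^ 2 = 3 := Real.sq_sqrt (by norm_num)
  by_contra hc
  push_neg at hc
  have hws : 1 ≤ ω * Real.sqrt 3 := by
    rw [div_le_iff₀ s3pos] at hc
    linarith
  nlinarith [sq_nonneg (ω * Real.sqrt 3 - 1), sq_nonneg (Real.sqrt 3 - 3/2),
    mul_pos h0 s3pos, sq_nonneg ω, mul_le_mul hws hws (by norm_num) (by positivity)]

/-- For every m ≥ 2, 1 - 3ω_m² + 3ω_m^{2(m+1)} > 0.  For m = 2 (golden ratio)
one has 1 - 3ω₂² + 3ω₂⁶ = ω₂⁸, and for m ≥ 3, ω_m < 1/√3. -/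
theorem measure_zero_ineq :
    (∀ m : ℕ, 2 ≤ m → ∀ ω : ℝ, ω ∈ Set.Ioo (0 : ℝ) 1 →
      (∑ k ∈ Finset.Icc 1 m, ω ^ k = 1) → 0 < 1 - 3 * ω ^ 2 + 3 * ω ^ (2 * (m + 1))) ∧
    (1 - 3 * ((Real.sqrt 5 - 1) / 2) ^ 2 + 3 * ((Real.sqrt 5 - 1) / 2) ^ 6
        = ((Real.sqrt 5 - 1) / 2) ^ 8) ∧
    (∀ m : ℕ, 3 ≤ m → ∀ ω : ℝ, ω ∈ Set.Ioo (0 : ℝ) 1 →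
      (∑ k ∈ Finset.Icc 1 m, ω ^ k = 1) → ω < 1 / Real.sqrt 3) := by
  refine ⟨?_, ?_, fun m hm ω hω hsum => sqrt3_bound m hm ω hω hsum⟩
  case refine_2 =>
    have hs : Real.sqrt 5 ^ 2 = 5 := Real.sq_sqrt (by norm_num)
    exact gold_eq _ (by linear_combination (1/4 : ℝ) * hs)
  · intro m hm ω hω hsum
    obtain ⟨h0, h1⟩ := hω
    rcases eq_or_lt_of_le hm with hm2 | hm3
    · -- m = 2
      subst hm2
      have hs : ω + ω ^ 2 = 1 := by
        have : Finset.Icc 1 2 = {1, 2} := by decide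
        rw [this] at hsum
        simpa [pow_one] using hsum
      have hω2 : ω ^ 2 = 1 - ω := by linarith
      have : 1 - 3 * ω ^ 2 + 3 * ω ^ 6 = ω ^ 8 := gold_eq ω hω2
      norm_num
      nlinarith [pow_pos h0 8]
    · -- m ≥ 3
      have hm3' : 3 ≤ m := hm3
      have hb := sqrt3_bound m hm3' ω ⟨h0, h1⟩ hsum
      have s3pos : (0 : ℝ) < Real.sqrt 3 := Real.sqrt_pos.mpr (by norm_num)
      have s3sq : Real.sqrt 3 ^ 2 = 3 := Real.sq_sqrt (by norm_num)
      have hω2 : 3 * ω ^ 2 < 1 := by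
        have : ω * Real.sqrt 3 < 1 := by
          rw [lt_div_iff₀ s3pos] at hb; linarith
        nlinarith [mul_pos h0 s3pos]
      have : 0 < ω ^ (2 * (m + 1)) := pow_pos h0 _
      linarith
end

section
/- For each integer m ≥ 2, let τ_m be the smaller positive root of 3t^{m+1} - 3t + 1, σ_m the smaller positive root of 2t^m - 3t + 1, and ω_m the multinacci number (root of t^{m+1} - 2t + 1 in (1/2, 2/3)). Then 1/3 < τ_m < σ_m < ω_m < 2/3. -/
lemma exists_root_aux {f : ℝ → ℝ} (hf : Continuous f) {a b : ℝ} (hab : a ≤ b)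
    (ha : 0 < f a) (hb : f b < 0) : ∃ t ∈ Set.Ioo a b, f t = 0 := by
  obtain ⟨t, ht, hft⟩ := intermediate_value_Ioo' hab hf.continuousOn
    (Set.mem_Ioo.mpr ⟨hb, ha⟩)
  exact ⟨t, ht, hft⟩

/-- 1/3 < τ_m < σ_m < ω_m < 2/3, where τ_m is the smaller positive root of
3t^{m+1} - 3t + 1, σ_m that of 2t^m - 3t + 1, and ω_m the multinacci number. -/
theorem tau_sigma_omega (m : ℕ) (hm : 2 ≤ m) (τ σ ω : ℝ)
    (hτ : 0 < τ) (hτr : 3 * τ ^ (m + 1) - 3 * τ + 1 = 0)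
    (hτmin : ∀ t : ℝ, 0 < t → 3 * t ^ (m + 1) - 3 * t + 1 = 0 → τ ≤ t)
    (hσ : 0 < σ) (hσr : 2 * σ ^ m - 3 * σ + 1 = 0)
    (hσmin : ∀ t : ℝ, 0 < t → 2 * t ^ m - 3 * t + 1 = 0 → σ ≤ t)
    (hω : ω ∈ Set.Ioo (1 / 2 : ℝ) (2 / 3)) (hωr : ω ^ (m + 1) - 2 * ω + 1 = 0) :
    1 / 3 < τ ∧ τ < σ ∧ σ < ω ∧ ω < 2 / 3 := by
  obtain ⟨hω1, hω2⟩ := hω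
  have hωpos : (0:ℝ) < ω := by linarith
  -- τ > 1/3
  have hτp : 0 < τ ^ (m + 1) := pow_pos hτ _
  have hτ13 : 1 / 3 < τ := by linarith
  -- σ > 1/3
  have hσp : 0 < σ ^ m := pow_pos hσ _
  have hσ13 : 1 / 3 < σ := by linarith
  -- q(ω) < 0
  have hωs : ω ^ (m + 1) = ω ^ m * ω := pow_succ ω m
  have hqω : 2 * ω ^ m - 3 * ω + 1 < 0 := by
    have h1 : ω ^ m * ω = 2 * ω - 1 := by linarith [hωr, hωs]
    have h2 : ω * (2 * ω ^ m - 3 * ω + 1) = -(3 * ω - 2) * (ω - 1) := by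
      nlinarith [h1]
    nlinarith [h2, mul_pos hωpos hωpos]
  -- q(1/3) > 0
  have hq13 : 0 < 2 * (1/3:ℝ) ^ m - 3 * (1/3) + 1 := by
    have : (0:ℝ) < (1/3:ℝ) ^ m := by positivity
    linarith
  -- σ < ω via IVT
  have hcq : Continuous (fun t : ℝ => 2 * t ^ m - 3 * t + 1) := by fun_prop
  obtain ⟨t, ht, hqt⟩ := exists_root_aux hcq (by linarith : (1/3:ℝ) ≤ ω) hq13 hqω
  have hσω : σ < ω := lt_of_le_of_lt (hσmin t (by linarith [ht.1]) hqt) ht.2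
  -- p(σ) < 0
  have hσ23 : σ < 2 / 3 := lt_trans hσω hω2
  have hσs : σ ^ (m + 1) = σ ^ m * σ := pow_succ σ m
  have hpσ : 3 * σ ^ (m + 1) - 3 * σ + 1 < 0 := by
    have h1 : 2 * σ ^ m = 3 * σ - 1 := by linarith
    have h2 : 2 * (3 * σ ^ (m + 1) - 3 * σ + 1) = (3 * σ - 1) * (3 * σ - 2) := by
      nlinarith [hσs, h1]
    nlinarith [h2, mul_pos (by linarith : (0:ℝ) < 3 * σ - 1) (by linarith : (0:ℝ) < 2 - 3 * σ)]
  -- p(1/3) > 0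
  have hp13 : 0 < 3 * (1/3:ℝ) ^ (m + 1) - 3 * (1/3) + 1 := by
    have : (0:ℝ) < (1/3:ℝ) ^ (m + 1) := by positivity
    linarith
  have hcp : Continuous (fun t : ℝ => 3 * t ^ (m + 1) - 3 * t + 1) := by fun_prop
  obtain ⟨s, hs, hps⟩ := exists_root_aux hcp (by linarith : (1/3:ℝ) ≤ σ) hp13 hpσ
  have hτσ : τ < σ := lt_of_le_of_lt (hτmin s (by linarith [hs.1]) hps) hs.2
  exact ⟨hτ13, hτσ, hσω, hω2⟩
end

section
/- Let u_n be defined by u_0 = 1, u_1 = 3, u_2 = 9 and u_{n+3} = 3u_{n+2} - 3u_n for n ≥ 0. Then u_n > 0 for all n and lim_{n→∞} u_n^{1/n} = 1/τ_2, where τ_2 ∈ (1/3, 1/2) is the smaller positive root of 3t³ - 3t + 1 = 0. -/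
/-!
Let `L = 1/τ`, so `2 < L < 3` and `L³ = 3L² - 3`. The characteristic polynomial factors as
`x³ - 3x² + 3 = (x - L)(x² - (3 - L)x - L(3 - L))`, so `v n = u (n+1) - L u n` satisfies the
two-step recurrence `v (n+2) = (3 - L) v (n+1) + L(3 - L) v n` with nonnegative coefficients.
From `v 0 = 3 - L ≥ 0` and `v 1 = 3 (3 - L) ≥ 0` we get `v ≥ 0`, i.e. `u n ≥ L ^ n`; and since
`(3 - L) · 2 + L(3 - L) ≤ 2²`, also `v n = O(2 ^ n)`, which together with `2 < L` gives
`u n = O(L ^ n)`. Taking `n`-th roots of `L ^ n ≤ u n ≤ c L ^ n` yields the limit `L`.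
-/
open Filter Topology

theorem tendsto_rpow_one_div_of_mul_pow_le_of_le_mul_pow {u : ℕ → ℝ} {L c₁ c₂ : ℝ}
    (hL : 0 < L) (hc₁ : 0 < c₁) (hlow : ∀ n, c₁ * L ^ n ≤ u n) (hup : ∀ n, u n ≤ c₂ * L ^ n) :
    Tendsto (fun n : ℕ => u n ^ ((1 : ℝ) / n)) atTop (𝓝 L) := by
  have hc₂ : 0 < c₂ := by
    have := (hlow 0).trans (hup 0)
    simp only [pow_zero, mul_one] at this
    linarith
  have root_tendsto : ∀ c : ℝ, 0 < c →
      Tendsto (fun n : ℕ => c ^ ((1 : ℝ) / n) * L) atTop (𝓝 L) := fun c hc => by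
    simpa using (((Real.continuousAt_const_rpow hc.ne').tendsto.comp
      tendsto_one_div_atTop_nhds_zero_nat).mul_const L)
  have root_mul_pow : ∀ c : ℝ, 0 ≤ c → ∀ n : ℕ, n ≠ 0 →
      (c * L ^ n) ^ ((1 : ℝ) / n) = c ^ ((1 : ℝ) / n) * L := fun c hc n hn => by
    rw [Real.mul_rpow hc (pow_nonneg hL.le n), one_div, Real.pow_rpow_inv_natCast hL.le hn]
  refine tendsto_of_tendsto_of_tendsto_of_le_of_le' (root_tendsto c₁ hc₁) (root_tendsto c₂ hc₂)
    ?_ ?_ <;> filter_upwards [eventually_ne_atTop 0] with n hn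
  · rw [← root_mul_pow c₁ hc₁.le n hn]
    exact Real.rpow_le_rpow (by positivity) (hlow n) (by positivity)
  · rw [← root_mul_pow c₂ hc₂.le n hn]
    exact Real.rpow_le_rpow ((by positivity : 0 ≤ c₁ * L ^ n).trans (hlow n)) (hup n)
      (by positivity)

section TwoStep

variable {v : ℕ → ℝ} {p q : ℝ}

theorem nonneg_of_le_two_step (hp : 0 ≤ p) (hq : 0 ≤ q) (h0 : 0 ≤ v 0) (h1 : 0 ≤ v 1)
    (hrec : ∀ n, p * v (n + 1) + q * v n ≤ v (n + 2)) (n : ℕ) : 0 ≤ v n := by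
  induction n using Nat.twoStepInduction with
  | zero => exact h0
  | one => exact h1
  | more n ih ih' => exact (add_nonneg (mul_nonneg hp ih') (mul_nonneg hq ih)).trans (hrec n)

theorem le_mul_pow_of_two_step_le {C r : ℝ} (hp : 0 ≤ p) (hq : 0 ≤ q) (hC : 0 ≤ C) (hr : 0 ≤ r)
    (hpqr : p * r + q ≤ r ^ 2) (h0 : v 0 ≤ C) (h1 : v 1 ≤ C * r)
    (hrec : ∀ n, v (n + 2) ≤ p * v (n + 1) + q * v n) (n : ℕ) : v n ≤ C * r ^ n := by
  induction n using Nat.twoStepInduction with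
  | zero => simpa using h0
  | one => simpa using h1
  | more n ih ih' =>
    calc v (n + 2) ≤ p * v (n + 1) + q * v n := hrec n
      _ ≤ p * (C * r ^ (n + 1)) + q * (C * r ^ n) := by gcongr
      _ = C * r ^ n * (p * r + q) := by ring
      _ ≤ C * r ^ n * r ^ 2 := by gcongr
      _ = C * r ^ (n + 2) := by ring

end TwoStep

theorem le_mul_pow_of_le_mul_add_pow {u : ℕ → ℝ} {L C r : ℝ} (hC : 0 ≤ C) (hr : 0 ≤ r)
    (hrL : r < L) (hstep : ∀ n, u (n + 1) ≤ L * u n + C * r ^ n) (n : ℕ) :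
    u n ≤ (u 0 + C / (L - r)) * L ^ n := by
  set E := C / (L - r)
  have hE : C + E * r = L * E := by
    simp only [E]; field_simp [(sub_pos.2 hrL).ne']; ring
  have hw := le_geom (u := fun n => u n + E * r ^ n) (hr.trans hrL.le) n fun k _ => by
    calc u (k + 1) + E * r ^ (k + 1) ≤ L * u k + C * r ^ k + E * r ^ (k + 1) := by
          gcongr; exact hstep k
      _ = L * u k + (C + E * r) * r ^ k := by ring
      _ = L * (u k + E * r ^ k) := by rw [hE]; ring
  have : 0 ≤ E * r ^ n := mul_nonneg (div_nonneg hC (sub_pos.2 hrL).le) (pow_nonneg hr n)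
  simp only [pow_zero, mul_one] at hw
  linarith [mul_comm (L ^ n) (u 0 + E)]

section HoleCount

variable {u : ℕ → ℝ} {L : ℝ}
  (hrec : ∀ n : ℕ, u (n + 3) = 3 * u (n + 2) - 3 * u n) (hL : L ^ 3 = 3 * L ^ 2 - 3)
include hrec hL

theorem sub_mul_two_step (n : ℕ) :
    u (n + 3) - L * u (n + 2) =
      (3 - L) * (u (n + 2) - L * u (n + 1)) + L * (3 - L) * (u (n + 1) - L * u n) := by
  linear_combination hrec n - u n * hL

variable (h0 : u 0 = 1) (h1 : u 1 = 3) (h2 : u 2 = 9) (hL3 : L < 3)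
include h0 h1 h2 hL3

theorem mul_le_succ_of_hole_rec (hL0 : 0 ≤ L) (n : ℕ) : L * u n ≤ u (n + 1) := by
  have hv := nonneg_of_le_two_step (v := fun n => u (n + 1) - L * u n)
    (by linarith : 0 ≤ 3 - L) (by nlinarith : 0 ≤ L * (3 - L))
    (by simp only [zero_add, h0, h1, mul_one]; linarith)
    (by simp only [Nat.reduceAdd, h1, h2]; linarith)
    (fun n => (sub_mul_two_step hrec hL n).ge) n
  simpa using hv

theorem succ_le_mul_add_of_hole_rec (hL2 : 2 ≤ L) (n : ℕ) :
    u (n + 1) ≤ L * u n + 3 / 2 * (3 - L) * 2 ^ n := by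
  have hv := le_mul_pow_of_two_step_le (v := fun n => u (n + 1) - L * u n)
    (C := 3 / 2 * (3 - L)) (by linarith : 0 ≤ 3 - L) (by nlinarith : 0 ≤ L * (3 - L))
    (by linarith) zero_le_two
    (by nlinarith) (by simp only [zero_add, h0, h1, mul_one]; linarith)
    (by simp only [Nat.reduceAdd, h1, h2]; linarith)
    (fun n => (sub_mul_two_step hrec hL n).le) n
  linarith

end HoleCount

theorem hole_growth_general (u : ℕ → ℝ)
    (h0 : u 0 = 1) (h1 : u 1 = 3) (h2 : u 2 = 9)
    (hrec : ∀ n : ℕ, u (n + 3) = 3 * u (n + 2) - 3 * u n)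
    (τ : ℝ) (hτ : τ ∈ Set.Ioo (1 / 3 : ℝ) (1 / 2))
    (hτr : 3 * τ ^ 3 - 3 * τ + 1 = 0) :
    (∀ n, 0 < u n) ∧
    Filter.Tendsto (fun n : ℕ => (u n) ^ ((1 : ℝ) / n)) Filter.atTop (nhds (1 / τ)) := by
  obtain ⟨hτ3, hτ2⟩ := hτ
  have hτ0 : 0 < τ := by linarith
  set L := 1 / τ
  have hL2 : 2 < L := by rw [lt_div_iff₀ hτ0]; linarith
  have hL3 : L < 3 := by rw [div_lt_iff₀ hτ0]; linarith
  have hL : L ^ 3 = 3 * L ^ 2 - 3 := by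
    simp only [L]; field_simp; linear_combination hτr
  have hlow (n : ℕ) : 1 * L ^ n ≤ u n := by
    simpa [h0] using geom_le (u := u) (by linarith) n
      fun k _ => mul_le_succ_of_hole_rec hrec hL h0 h1 h2 hL3 (by linarith) k
  have hup := le_mul_pow_of_le_mul_add_pow (by nlinarith) zero_le_two hL2
    (succ_le_mul_add_of_hole_rec hrec hL h0 h1 h2 hL3 hL2.le)
  exact ⟨fun n => (by positivity : (0 : ℝ) < 1 * L ^ n).trans_le (hlow n),
    tendsto_rpow_one_div_of_mul_pow_le_of_le_mul_pow (by positivity) one_pos hlow hup⟩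

/-- The hole counts u₀ = 1, u₁ = 3, u₂ = 9, u_{n+3} = 3u_{n+2} - 3u_n are
positive and grow at rate 1/τ₂, where τ₂ is the smaller positive root of
3t³ - 3t + 1. -/
theorem hole_growth (u : ℕ → ℝ)
    (h0 : u 0 = 1) (h1 : u 1 = 3) (h2 : u 2 = 9)
    (hrec : ∀ n : ℕ, u (n + 3) = 3 * u (n + 2) - 3 * u n)
    (τ : ℝ) (hτ : τ ∈ Set.Ioo (1 / 3 : ℝ) (1 / 2))
    (hτr : 3 * τ ^ 3 - 3 * τ + 1 = 0)
    (hτmin : ∀ t : ℝ, 0 < t → 3 * t ^ 3 - 3 * t + 1 = 0 → τ ≤ t) :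
    (∀ n, 0 < u n) ∧
    Filter.Tendsto (fun n : ℕ => (u n) ^ ((1 : ℝ) / n)) Filter.atTop (nhds (1 / τ)) :=
  hole_growth_general u h0 h1 h2 hrec τ hτ hτr
end
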